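/- Fix Δx > 0, Δt > 0 and an integer M ≥ 1. Let u : ℤ × ℤ → ℝ be a grid function with u(m + M, n) = u(m, n) for all (m,n) (spatial M-periodicity), and suppose u satisfies the multisymplectic (compact Preissmann-type) scheme at every point: D_n(μ_m³ u_{-2,0}) + D_m( (1/3)·μ_m((μ_m μ_n u_{-2,0})³) + D_m²μ_n u_{-2,0} ) = 0. Then the discrete mass Σ_{i=0}^{M−1} (μ_m³ u_{-2,0})(i, n) is independent of n. -/

import Mathlib

noncomputable section

/-- Shift operator: `(Sh i j u)(m,n) = u(m+i, n+j)`. -/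
def Sh (i j : ℤ) (f : ℤ × ℤ → ℝ) : ℤ × ℤ → ℝ := fun p => f (p.1 + i, p.2 + j)

/-- Forward difference in space: `D_m f = (S_m f − f)/Δx`. -/
def Dm (dx : ℝ) (f : ℤ × ℤ → ℝ) : ℤ × ℤ → ℝ := fun p => (f (p.1 + 1, p.2) - f p) / dx

/-- Forward difference in time: `D_n f = (S_n f − f)/Δt`. -/
def Dn (dt : ℝ) (f : ℤ × ℤ → ℝ) : ℤ × ℤ → ℝ := fun p => (f (p.1, p.2 + 1) - f p) / dt

/-- Forward average in space: `μ_m f = (S_m f + f)/2`. -/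
def μm (f : ℤ × ℤ → ℝ) : ℤ × ℤ → ℝ := fun p => (f (p.1 + 1, p.2) + f p) / 2

/-- Forward average in time: `μ_n f = (S_n f + f)/2`. -/
def μn (f : ℤ × ℤ → ℝ) : ℤ × ℤ → ℝ := fun p => (f (p.1, p.2 + 1) + f p) / 2

/-- Spatial periodicity with period `M`. -/
def Per (M : ℤ) (f : ℤ × ℤ → ℝ) : Prop := ∀ p : ℤ × ℤ, f (p.1 + M, p.2) = f p

lemma Per.sh {M i j f} (h : Per M f) : Per M (Sh i j f) := by
  intro p
  have := h (p.1 + i, p.2 + j)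
  simpa [Sh, add_right_comm] using this

lemma Per.dm {M dx f} (h : Per M f) : Per M (Dm dx f) := by
  intro p
  have h1 := h (p.1 + 1, p.2)
  have h2 := h p
  simp only [Dm]
  rw [show p.1 + M + 1 = p.1 + 1 + M by ring, h1, h2]

lemma Per.dn {M dt f} (h : Per M f) : Per M (Dn dt f) := by
  intro p
  have h1 := h (p.1, p.2 + 1)
  have h2 := h p
  simp only [Dn]
  simp only [h2]
  rw [show ((p.1 + M, p.2 + 1) : ℤ × ℤ) = ((p.1, p.2 + 1).1 + M, (p.1, p.2 + 1).2) by rfl, h1]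

lemma Per.mum {M f} (h : Per M f) : Per M (μm f) := by
  intro p
  have h1 := h (p.1 + 1, p.2)
  have h2 := h p
  simp only [μm]
  rw [show p.1 + M + 1 = p.1 + 1 + M by ring, h1, h2]

lemma Per.mun {M f} (h : Per M f) : Per M (μn f) := by
  intro p
  have h1 := h (p.1, p.2 + 1)
  have h2 := h p
  simp only [μn, h2]
  rw [show ((p.1 + M, p.2 + 1) : ℤ × ℤ) = ((p.1, p.2 + 1).1 + M, (p.1, p.2 + 1).2) by rfl, h1]

lemma Per.add {M f g} (hf : Per M f) (hg : Per M g) : Per M (f + g) := by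
  intro p; simp [Pi.add_apply, hf p, hg p]

lemma Per.smul {M f} (c : ℝ) (h : Per M f) : Per M (c • f) := by
  intro p; simp [Pi.smul_apply, h p]

lemma Per.pow3 {M f} (h : Per M f) : Per M (f ^ 3) := by
  intro p; simp [Pi.pow_apply, h p]

/-- Spatially periodic solutions of the multisymplectic (compact Preissmann-type) scheme
conserve the discrete mass. -/
theorem multisymplectic_discrete_mass_invariant (dx dt : ℝ) (hdx : 0 < dx) (hdt : 0 < dt)
    (M : ℕ) (hM : 1 ≤ M) (u : ℤ × ℤ → ℝ)
    (hper : ∀ m n : ℤ, u (m + (M : ℤ), n) = u (m, n))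
    (hscheme : ∀ p : ℤ × ℤ,
      (Dn dt (μm (μm (μm (Sh (-2) 0 u))))
        + Dm dx ((1/3 : ℝ) • μm ((μm (μn (Sh (-2) 0 u))) ^ 3)
            + Dm dx (Dm dx (μn (Sh (-2) 0 u))))) p = 0) :
    ∀ n₁ n₂ : ℤ,
      (∑ i ∈ Finset.range M, μm (μm (μm (Sh (-2) 0 u))) ((i : ℤ), n₁))
        = ∑ i ∈ Finset.range M, μm (μm (μm (Sh (-2) 0 u))) ((i : ℤ), n₂) := by
  set g : ℤ × ℤ → ℝ := μm (μm (μm (Sh (-2) 0 u))) with hg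
  set F : ℤ × ℤ → ℝ := (1/3 : ℝ) • μm ((μm (μn (Sh (-2) 0 u))) ^ 3)
      + Dm dx (Dm dx (μn (Sh (-2) 0 u))) with hF
  have hu : Per (M : ℤ) u := fun p => hper p.1 p.2
  have hFper : Per (M : ℤ) F :=
    Per.add (Per.smul _ ((hu.sh.mun.mum).pow3.mum)) (hu.sh.mun.dm.dm)
  -- step relation
  have step : ∀ n : ℤ,
      (∑ i ∈ Finset.range M, g ((i : ℤ), n + 1)) = ∑ i ∈ Finset.range M, g ((i : ℤ), n) := by
    intro n
    have key : ∀ m : ℤ, g (m, n + 1) - g (m, n) = -(dt / dx) * (F (m + 1, n) - F (m, n)) := by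
      intro m
      have h := hscheme (m, n)
      simp only [Pi.add_apply, Dn, Dm] at h
      field_simp at h ⊢
      linarith
    have : (∑ i ∈ Finset.range M, (g ((i : ℤ), n + 1) - g ((i : ℤ), n)))
        = -(dt / dx) * ∑ i ∈ Finset.range M, (F (((i : ℕ) + 1 : ℕ), n) - F ((i : ℤ), n)) := by
      rw [Finset.mul_sum]
      refine Finset.sum_congr rfl fun i _ => ?_
      push_cast
      exact key i
    rw [Finset.sum_range_sub (f := fun k : ℕ => F ((k : ℤ), n))] at this
    have hFM : F ((M : ℤ), n) = F ((0 : ℤ), n) := by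
      have h0 := hFper (0, n)
      rw [show ((0 : ℤ), n).1 + (M : ℤ) = (M : ℤ) by simp] at h0
      exact h0
    rw [hFM] at this
    norm_num at this
    linarith
  have all : ∀ n : ℤ,
      (∑ i ∈ Finset.range M, g ((i : ℤ), n)) = ∑ i ∈ Finset.range M, g ((i : ℤ), 0) := by
    intro n
    induction n using Int.induction_on with
    | zero => rfl
    | succ k ih => rw [step k]; exact ih
    | pred k ih => rw [← ih, ← step (-(k:ℤ) - 1)]; norm_num
  intro n₁ n₂
  rw [all n₁, all n₂]
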